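/- Let X ⊆ ℕ be finite with 0 ∈ X, and suppose G admits a TIASSL f with respect to X. Let 𝒟 be the set of nonempty subsets of X that are neither non-trivial sumsets of two subsets of X nor non-trivial summands of any subset of X. Then every vertex of G whose label lies in 𝒟 \ {{0}} is a pendant vertex of G (adjacent only to the vertex labeled {0}). -/

import Mathlib

open Pointwise

/-- A collection `T` of subsets of a finite set `X ⊆ ℕ` is a topology on `X`. -/
def IsTopologyOn (T : Set (Finset ℕ)) (X : Finset ℕ) : Prop :=
  ∅ ∈ T ∧ X ∈ T ∧ (∀ A ∈ T, A ⊆ X) ∧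
    (∀ A ∈ T, ∀ B ∈ T, A ∪ B ∈ T) ∧ (∀ A ∈ T, ∀ B ∈ T, A ∩ B ∈ T)

/-- The set-labels induced on edges: sumsets of the labels of adjacent vertices. -/
def edgeLabels {V : Type*} (G : SimpleGraph V) (f : V → Finset ℕ) : Set (Finset ℕ) :=
  {A : Finset ℕ | ∃ u v, G.Adj u v ∧ A = f u + f v}

/-- `f` is a topological integer additive set-sequential labeling (TIASSL) of `G`
with respect to the ground set `X`. -/
def IsTIASSL {V : Type*} (G : SimpleGraph V) (f : V → Finset ℕ) (X : Finset ℕ) : Prop :=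
  Function.Injective f ∧ (∀ v, (f v).Nonempty) ∧ (∀ v, f v ⊆ X) ∧
    (∀ u v, G.Adj u v → f u + f v ⊆ X) ∧
    IsTopologyOn (Set.range f ∪ {∅}) X ∧
    Set.range f ∪ edgeLabels G f = {A : Finset ℕ | A ⊆ X ∧ A.Nonempty}

/-- The nonempty subsets of `X` that are not non-trivial sumsets of two subsets of `X`. -/
def notSumsets (X : Finset ℕ) : Set (Finset ℕ) :=
  {A : Finset ℕ | A ⊆ X ∧ A.Nonempty ∧
    ¬ ∃ B C : Finset ℕ, B ⊆ X ∧ C ⊆ X ∧ B ≠ {0} ∧ C ≠ {0} ∧ A = B + C}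

/-- The nonempty subsets of `X` that are not non-trivial summands of any subset of `X`. -/
def notSummands (X : Finset ℕ) : Set (Finset ℕ) :=
  {B : Finset ℕ | B ⊆ X ∧ B.Nonempty ∧
    ¬ ∃ C D : Finset ℕ, C ⊆ X ∧ D ⊆ X ∧ D.Nonempty ∧ D ≠ {0} ∧ C = B + D}

/-
A label that is not a non-trivial summand can only be added to `{0}` inside `X`, so every
neighbour of such a vertex carries the label `{0}`; by injectivity of the labeling there is at
most one such neighbour. There is at least one: `{0}` must occur as a vertex or edge label, so the
graph has a second vertex, and connectedness gives the vertex an edge.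
-/

lemma eq_zero_of_mem_notSummands_of_add_subset {X B D : Finset ℕ} (hB : B ∈ notSummands X)
    (hD : D ⊆ X) (hDne : D.Nonempty) (hBD : B + D ⊆ X) : D = {0} := by
  by_contra hD0
  exact hB.2.2 ⟨B + D, D, hBD, hD, hDne, hD0, rfl⟩

namespace IsTIASSL

variable {V : Type*} {G : SimpleGraph V} {f : V → Finset ℕ} {X : Finset ℕ}

lemma eq_zero_of_adj_of_mem_notSummands (hf : IsTIASSL G f X) {v u : V}
    (hv : f v ∈ notSummands X) (hadj : G.Adj v u) : f u = {0} := by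
  obtain ⟨-, hne, hsub, hedge, -⟩ := hf
  exact eq_zero_of_mem_notSummands_of_add_subset hv (hsub u) (hne u) (hedge v u hadj)

lemma nontrivial_of_ne_zero (hf : IsTIASSL G f X) (h0 : 0 ∈ X) {v : V} (hv : f v ≠ {0}) :
    Nontrivial V := by
  obtain ⟨-, -, -, -, -, hcover⟩ := hf
  have hzero : ({0} : Finset ℕ) ∈ Set.range f ∪ edgeLabels G f := by
    rw [hcover]
    exact ⟨Finset.singleton_subset_iff.2 h0, Finset.singleton_nonempty 0⟩
  rcases hzero with ⟨w, hw⟩ | ⟨a, b, hab, -⟩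
  · exact nontrivial_of_ne w v (by rintro rfl; exact hv hw)
  · exact nontrivial_of_ne a b hab.ne

end IsTIASSL

theorem tiassl_neither_sumset_nor_summand_pendant_general {V : Type*} [Fintype V]
    (G : SimpleGraph V) [DecidableRel G.Adj] (hconn : G.Connected)
    (X : Finset ℕ) (h0 : (0 : ℕ) ∈ X)
    (f : V → Finset ℕ) (hf : IsTIASSL G f X) :
    ∀ v, f v ∈ notSumsets X ∩ notSummands X → f v ≠ {0} →
      G.degree v = 1 ∧ ∀ u, G.Adj v u → f u = {0} := by
  intro v hv hne
  have hzero : ∀ u, G.Adj v u → f u = {0} := fun u ↦ hf.eq_zero_of_adj_of_mem_notSummands hv.2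
  have := hf.nontrivial_of_ne_zero h0 hne
  obtain ⟨u, hu⟩ := (G.degree_pos_iff_exists_adj v).1 (hconn.preconnected.degree_pos_of_nontrivial v)
  refine ⟨SimpleGraph.degree_eq_one_iff_existsUnique_adj.2 ⟨u, hu, fun w hw ↦ hf.1 ?_⟩, hzero⟩
  rw [hzero w hw, hzero u hu]

theorem tiassl_neither_sumset_nor_summand_pendant {V : Type*} [Fintype V] [DecidableEq V]
    (G : SimpleGraph V) [DecidableRel G.Adj] (hconn : G.Connected)
    (X : Finset ℕ) (h0 : (0 : ℕ) ∈ X)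
    (f : V → Finset ℕ) (hf : IsTIASSL G f X) :
    ∀ v, f v ∈ notSumsets X ∩ notSummands X → f v ≠ {0} →
      G.degree v = 1 ∧ ∀ u, G.Adj v u → f u = {0} :=
  tiassl_neither_sumset_nor_summand_pendant_general G hconn X h0 f hf
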